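/- Let {H_θ}_{θ>0} be random variables with |E[H_θ H_w]| ≤ C_β (θ/w)^β for all 0 < θ < w, where β > 0. Then for L_T := (1/log T) ∫_1^T (H_θ/θ) dθ one has E[L_T²] ≤ 2 C_β / (β log T) for all T > 1. -/

import Mathlib

/-!
The covariance bound, symmetrized, says `E[H_θ H_w] / (θ w) ≤ C_β · k(θ, w)` off the diagonal, with
`k(θ, w) = (min θ w / max θ w)^β / (θ w)`. For fixed `θ` the kernel `k(θ, ·)` integrates over
`(0, ∞)` to exactly `2 / (β θ)` (each side of `θ` contributes `1 / (β θ)`), and integrating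
`2 C_β / (β θ)` over `(1, T]` gives `2 C_β log T / β`.
-/

open MeasureTheory Filter Set

noncomputable def decayKernel (β θ w : ℝ) : ℝ := (min θ w / max θ w) ^ β / (θ * w)

namespace decayKernel

variable {β θ w : ℝ}

lemma nonneg (hθ : 0 < θ) (hw : 0 < w) : 0 ≤ decayKernel β θ w := by
  unfold decayKernel; positivity

lemma eq_of_le (hw : 0 < w) (hwθ : w ≤ θ) :
    decayKernel β θ w = θ ^ (-β - 1) * w ^ (β - 1) := by
  have hθ : 0 < θ := hw.trans_le hwθ
  rw [decayKernel, min_eq_right hwθ, max_eq_left hwθ, Real.div_rpow hw.le hθ.le,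
    Real.rpow_sub hθ, Real.rpow_neg hθ.le, Real.rpow_sub hw, Real.rpow_one, Real.rpow_one]
  field_simp

lemma eq_of_ge (hθ : 0 < θ) (hθw : θ ≤ w) :
    decayKernel β θ w = θ ^ (β - 1) * w ^ (-β - 1) := by
  have hw : 0 < w := hθ.trans_le hθw
  rw [decayKernel, min_eq_left hθw, max_eq_right hθw, Real.div_rpow hθ.le hw.le,
    Real.rpow_sub hθ, Real.rpow_sub hw, Real.rpow_neg hw.le, Real.rpow_one, Real.rpow_one]
  field_simp

variable (hβ : 0 < β)
include hβ

lemma integrableOn_Ioc : IntegrableOn (decayKernel β θ) (Ioc 0 θ) := by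
  refine IntegrableOn.congr_fun ?_ (fun w hw => (eq_of_le hw.1 hw.2).symm) measurableSet_Ioc
  exact ((intervalIntegral.intervalIntegrable_rpow' (by linarith)).const_mul _).1

lemma integral_Ioc (hθ : 0 < θ) : ∫ w in Ioc 0 θ, decayKernel β θ w = 1 / (β * θ) := by
  rw [setIntegral_congr_fun measurableSet_Ioc (fun w hw => eq_of_le hw.1 hw.2),
    integral_const_mul, ← intervalIntegral.integral_of_le hθ.le,
    integral_rpow (Or.inl (by linarith)), sub_add_cancel, Real.zero_rpow hβ.ne',
    sub_zero, Real.rpow_sub hθ, Real.rpow_neg hθ.le, Real.rpow_one]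
  have : 0 < θ ^ β := Real.rpow_pos_of_pos hθ β
  field_simp

lemma integrableOn_Ioi (hθ : 0 < θ) : IntegrableOn (decayKernel β θ) (Ioi θ) := by
  refine IntegrableOn.congr_fun ?_ (fun w hw => (eq_of_ge hθ (le_of_lt hw)).symm)
    measurableSet_Ioi
  exact (integrableOn_Ioi_rpow_of_lt (by linarith) hθ).const_mul _

lemma integral_Ioi (hθ : 0 < θ) : ∫ w in Ioi θ, decayKernel β θ w = 1 / (β * θ) := by
  rw [setIntegral_congr_fun measurableSet_Ioi (fun w hw => eq_of_ge hθ (le_of_lt hw)),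
    integral_const_mul, integral_Ioi_rpow_of_lt (by linarith) hθ, sub_add_cancel,
    Real.rpow_sub hθ, Real.rpow_neg hθ.le, Real.rpow_one]
  have : 0 < θ ^ β := Real.rpow_pos_of_pos hθ β
  field_simp

lemma integral_Ioi_zero (hθ : 0 < θ) : ∫ w in Ioi 0, decayKernel β θ w = 2 / (β * θ) := by
  rw [← Ioc_union_Ioi_eq_Ioi hθ.le, setIntegral_union Ioc_disjoint_Ioi_same measurableSet_Ioi
    (integrableOn_Ioc hβ) (integrableOn_Ioi hβ hθ), integral_Ioc hβ hθ, integral_Ioi hβ hθ]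
  ring

lemma integrableOn_Ioi_zero (hθ : 0 < θ) : IntegrableOn (decayKernel β θ) (Ioi 0) := by
  rw [← Ioc_union_Ioi_eq_Ioi hθ.le]
  exact (integrableOn_Ioc hβ).union (integrableOn_Ioi hβ hθ)

lemma setIntegral_le (hθ : 0 < θ) {s : Set ℝ} (hs : s ⊆ Ioi 0) :
    ∫ w in s, decayKernel β θ w ≤ 2 / (β * θ) := by
  rw [← integral_Ioi_zero hβ hθ]
  refine setIntegral_mono_set (integrableOn_Ioi_zero hβ hθ) ?_ (Eventually.of_forall hs)
  filter_upwards [ae_restrict_mem measurableSet_Ioi] with w hw using nonneg hθ hw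

end decayKernel

section SymmetricKernel

variable {K : ℝ → ℝ → ℝ} {β C : ℝ} (hsymm : ∀ θ w, K θ w = K w θ)
  (hcov : ∀ θ w, 0 < θ → θ < w → |K θ w| ≤ C * (θ / w) ^ β)
include hsymm hcov

lemma div_mul_le_mul_decayKernel {θ w : ℝ} (hθ : 0 < θ) (hw : 0 < w) (hne : θ ≠ w) :
    K θ w / (θ * w) ≤ C * decayKernel β θ w := by
  rw [decayKernel, mul_div_assoc', div_le_div_iff_of_pos_right (mul_pos hθ hw)]
  refine (le_abs_self _).trans ?_
  rcases hne.lt_or_gt with h | h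
  · rw [min_eq_left h.le, max_eq_right h.le]
    exact hcov θ w hθ h
  · rw [min_eq_right h.le, max_eq_left h.le, hsymm]
    exact hcov w θ hw h

lemma setIntegral_div_mul_le (hβ : 0 < β) (hC : 0 ≤ C) {θ : ℝ} (hθ : 0 < θ) {s : Set ℝ}
    (hs : MeasurableSet s) (hs0 : s ⊆ Ioi 0) :
    ∫ w in s, K θ w / (θ * w) ≤ 2 * C / (β * θ) := by
  by_cases hint : IntegrableOn (fun w => K θ w / (θ * w)) s
  · have hdom : IntegrableOn (fun w => C * decayKernel β θ w) s :=
      ((decayKernel.integrableOn_Ioi_zero hβ hθ).mono_set hs0).const_mul C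
    have hne : ∀ᵐ w ∂volume.restrict s, w ≠ θ := ae_restrict_of_ae (volume.ae_ne θ)
    calc ∫ w in s, K θ w / (θ * w) ≤ ∫ w in s, C * decayKernel β θ w := by
          refine integral_mono_ae hint hdom ?_
          filter_upwards [hne, ae_restrict_mem hs] with w hwθ hw
          exact div_mul_le_mul_decayKernel hsymm hcov hθ (hs0 hw) hwθ.symm
      _ = C * ∫ w in s, decayKernel β θ w := integral_const_mul C _
      _ ≤ C * (2 / (β * θ)) := by gcongr; exact decayKernel.setIntegral_le hβ hθ hs0
      _ = 2 * C / (β * θ) := by ring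
  · rw [integral_undef hint]
    have := mul_pos hβ hθ
    positivity

lemma setIntegral_setIntegral_div_mul_le (hβ : 0 < β) (hC : 0 ≤ C) {a b : ℝ} (ha : 0 < a)
    (hab : a ≤ b) :
    ∫ θ in Ioc a b, ∫ w in Ioc a b, K θ w / (θ * w) ≤ 2 * C / β * Real.log (b / a) := by
  have hsub : Ioc a b ⊆ Ioi 0 := fun x hx => ha.trans hx.1
  by_cases hint : IntegrableOn (fun θ => ∫ w in Ioc a b, K θ w / (θ * w)) (Ioc a b)
  · calc ∫ θ in Ioc a b, ∫ w in Ioc a b, K θ w / (θ * w)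
          ≤ ∫ θ in Ioc a b, 2 * C / β * θ⁻¹ := by
            refine setIntegral_mono_on hint ?_ measurableSet_Ioc fun θ hθ => ?_
            · refine ((intervalIntegral.intervalIntegrable_inv (f := id) (fun x hx => ?_)
                continuousOn_id).const_mul _).1
              exact (ha.trans_le (uIcc_of_le hab ▸ hx).1).ne'
            · exact (setIntegral_div_mul_le hsymm hcov hβ hC (ha.trans hθ.1) measurableSet_Ioc
                hsub).trans_eq (by field_simp)
      _ = 2 * C / β * Real.log (b / a) := by
          rw [integral_const_mul, ← intervalIntegral.integral_of_le hab,
            integral_inv_of_pos ha (ha.trans_le hab)]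
  · rw [integral_undef hint]
    have : 0 ≤ Real.log (b / a) := Real.log_nonneg ((one_le_div ha).2 hab)
    have := hβ.le
    positivity

end SymmetricKernel

theorem stmt1_general {Ω : Type*} [MeasurableSpace Ω] (P : Measure Ω)
    (H : ℝ → Ω → ℝ) (β Cβ : ℝ) (hβ : 0 < β)
    (hcov : ∀ θ w : ℝ, 0 < θ → θ < w →
      |∫ ω, H θ ω * H w ω ∂P| ≤ Cβ * (θ / w) ^ β)
    (L : ℝ → Ω → ℝ)
    (hFubini : ∀ T : ℝ, 1 < T → ∫ ω, (L T ω) ^ 2 ∂P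
      = ((Real.log T)⁻¹) ^ 2 *
          ∫ θ in Set.Ioc 1 T, ∫ w in Set.Ioc 1 T, (∫ ω, H θ ω * H w ω ∂P) / (θ * w)) :
    ∀ T : ℝ, 1 < T → ∫ ω, (L T ω) ^ 2 ∂P ≤ 2 * Cβ / (β * Real.log T) := by
  intro T hT
  have hsymm : ∀ θ w, ∫ ω, H θ ω * H w ω ∂P = ∫ ω, H w ω * H θ ω ∂P := fun θ w => by
    simp only [mul_comm]
  have hC : 0 ≤ Cβ := by
    have h := (abs_nonneg _).trans (hcov 1 2 one_pos one_lt_two)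
    exact nonneg_of_mul_nonneg_left h (Real.rpow_pos_of_pos (by norm_num) β)
  have hlog : 0 < Real.log T := Real.log_pos hT
  have hdouble := setIntegral_setIntegral_div_mul_le hsymm hcov hβ hC one_pos hT.le
  rw [div_one] at hdouble
  calc ∫ ω, (L T ω) ^ 2 ∂P ≤ (Real.log T)⁻¹ ^ 2 * (2 * Cβ / β * Real.log T) := by
        rw [hFubini T hT]; gcongr
    _ = 2 * Cβ / (β * Real.log T) := by field_simp

theorem stmt1 {Ω : Type*} [MeasurableSpace Ω] (P : Measure Ω) [IsProbabilityMeasure P]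
    (H : ℝ → Ω → ℝ) (β Cβ : ℝ) (hβ : 0 < β)
    (hcov : ∀ θ w : ℝ, 0 < θ → θ < w →
      |∫ ω, H θ ω * H w ω ∂P| ≤ Cβ * (θ / w) ^ β)
    (L : ℝ → Ω → ℝ)
    (hL : ∀ T ω, L T ω = (Real.log T)⁻¹ * ∫ θ in Set.Ioc 1 T, H θ ω / θ)
    (hFubini : ∀ T : ℝ, 1 < T → ∫ ω, (L T ω) ^ 2 ∂P
      = ((Real.log T)⁻¹) ^ 2 *
          ∫ θ in Set.Ioc 1 T, ∫ w in Set.Ioc 1 T, (∫ ω, H θ ω * H w ω ∂P) / (θ * w))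
    (hIntOn : ∀ T : ℝ, 1 < T → IntegrableOn
      (fun p : ℝ × ℝ => (∫ ω, H p.1 ω * H p.2 ω ∂P) / (p.1 * p.2))
      (Set.Ioc 1 T ×ˢ Set.Ioc 1 T)) :
    ∀ T : ℝ, 1 < T → ∫ ω, (L T ω) ^ 2 ∂P ≤ 2 * Cβ / (β * Real.log T) :=
  stmt1_general P H β Cβ hβ hcov L hFubini
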